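/- arXiv:1911.06855 — 4 statements merged into one kernel-verified Lean document; each statement's English description precedes it below -/
import Mathlib

section
/- The twirling of any operator Ω on C^d ⊗ C^d over the Heisenberg–Weyl group, Ω' = (1/d²) Σ_{u,v=0}^{d-1} (W(u,v)* ⊗ W(u,v)) Ω (W(u,v)* ⊗ W(u,v))†, is diagonal in the generalized Bell basis; i.e., Ω' = Σ_{u,v} λ_{u,v} |Φ_{u,v}⟩⟨Φ_{u,v}| where λ_{u,v} = ⟨Φ_{u,v}| Ω |Φ_{u,v}⟩. -/
open Matrix Complex
open scoped Kronecker

/-- The cyclic shift operator `X` on `ℂ^d`. -/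
noncomputable def shiftX (d : ℕ) : Matrix (Fin d) (Fin d) ℂ :=
  Matrix.of fun i j => if (i : ℕ) = ((j : ℕ) + 1) % d then 1 else 0

/-- The clock operator `Z` on `ℂ^d`. -/
noncomputable def clockZ (d : ℕ) : Matrix (Fin d) (Fin d) ℂ :=
  Matrix.of fun i j => if i = j then Complex.exp (2 * Real.pi * Complex.I * (i : ℕ) / d) else 0

/-- The Heisenberg–Weyl operator `W(u,v) = X^u Z^v`. -/
noncomputable def weylW (d : ℕ) (u v : ℕ) : Matrix (Fin d) (Fin d) ℂ :=
  shiftX d ^ u * clockZ d ^ v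

/-- The maximally entangled state `|Φ₊⟩ = (1/√d) ∑ |jj⟩` as a vector. -/
noncomputable def bellPlus (d : ℕ) : Fin d × Fin d → ℂ :=
  fun p => if p.1 = p.2 then (1 / Real.sqrt d : ℝ) else 0

/-- The generalized Bell state `|Φ_{u,v}⟩ = (I ⊗ W(u,v)) |Φ₊⟩`. -/
noncomputable def bellState (d : ℕ) (u v : ℕ) : Fin d × Fin d → ℂ :=
  ((1 : Matrix (Fin d) (Fin d) ℂ) ⊗ₖ weylW d u v).mulVec (bellPlus d)

/-!
With `ω = exp(2πi/d)`, the generalized Bell states resolve the identity and are common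
eigenvectors of all twirling unitaries: `(W(g)* ⊗ W(g)) |Φ_k⟩ = χ_k(g) |Φ_k⟩` with the symplectic
character `χ_k(g) = ω^(k₁g₂ - g₁k₂)` of `(ℤ/d)²`. Expanding `Ω` in the Bell basis, conjugation
by `W(g)* ⊗ W(g)` multiplies the coefficient of `|Φ_k⟩⟨Φ_l|` by `χ_k(g) conj(χ_l(g))`, and by
orthogonality of characters the average over `g` kills every coefficient with `k ≠ l`.
-/

lemma Fintype.sum_ite_eq_add_right {G M : Type*} [AddGroup G] [Fintype G] [DecidableEq G]
    [AddCommMonoid M] (a u : G) (f : G → M) :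
    ∑ c, (if a = c + u then f c else 0) = f (a - u) := by
  simp only [eq_comm (a := a), ← eq_sub_iff_add_eq, Finset.sum_ite_eq', Finset.mem_univ, if_true]

namespace Matrix

variable {ι κ G R : Type*} [Fintype ι] [Fintype κ] [CommSemiring R]

lemma vecMulVec_mul_mul_vecMulVec (x y x' y' : ι → R) (A : Matrix ι ι R) :
    vecMulVec x y * A * vecMulVec x' y' = (y ⬝ᵥ A *ᵥ x') • vecMulVec x y' := by
  rw [vecMulVec_mul, vecMulVec_mul_vecMulVec, dotProduct_mulVec, vecMulVec_smul]

variable [StarRing R]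

lemma mul_vecMulVec_star_mul_conjTranspose (U : Matrix ι ι R) (x y : ι → R) :
    U * vecMulVec x (star y) * Uᴴ = vecMulVec (U *ᵥ x) (star (U *ᵥ y)) := by
  rw [mul_vecMulVec, vecMulVec_mul, star_mulVec]

variable [DecidableEq ι]

lemma eq_sum_sum_smul_vecMulVec {φ : κ → ι → R}
    (hφ : ∑ k, vecMulVec (φ k) (star (φ k)) = 1) (A : Matrix ι ι R) :
    A = ∑ k, ∑ l, (star (φ k) ⬝ᵥ A *ᵥ φ l) • vecMulVec (φ k) (star (φ l)) := by
  conv_lhs => rw [← one_mul A, ← mul_one (1 * A), ← hφ]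
  simp only [Finset.sum_mul, Finset.mul_sum, vecMulVec_mul_mul_vecMulVec]
  exact Finset.sum_comm

theorem sum_mul_mul_conjTranspose_of_eigenbasis [Fintype G] [DecidableEq κ]
    (U : G → Matrix ι ι R) (φ : κ → ι → R) (χ : κ → G → R) (c : R)
    (hφ : ∑ k, vecMulVec (φ k) (star (φ k)) = 1)
    (hU : ∀ g k, U g *ᵥ φ k = χ k g • φ k)
    (hχ : ∀ k l, ∑ g, χ k g * star (χ l g) = if k = l then c else 0) (A : Matrix ι ι R) :
    ∑ g, U g * A * (U g)ᴴ = c • ∑ k, (star (φ k) ⬝ᵥ A *ᵥ φ k) • vecMulVec (φ k) (star (φ k)) := by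
  have hconj : ∀ g k l, U g * vecMulVec (φ k) (star (φ l)) * (U g)ᴴ =
      (χ k g * star (χ l g)) • vecMulVec (φ k) (star (φ l)) := by
    intro g k l
    rw [mul_vecMulVec_star_mul_conjTranspose, hU, hU, star_smul, smul_vecMulVec, vecMulVec_smul,
      smul_smul]
  conv_lhs => rw [eq_sum_sum_smul_vecMulVec hφ A]
  simp only [Finset.mul_sum, Finset.sum_mul, mul_smul_comm, smul_mul_assoc, hconj]
  rw [Finset.sum_comm, Finset.smul_sum]
  refine Finset.sum_congr rfl fun k _ => ?_
  rw [Finset.sum_comm]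
  simp only [smul_smul, ← Finset.sum_smul, ← Finset.mul_sum, hχ, mul_ite, mul_zero, ite_smul,
    zero_smul, Finset.sum_ite_eq, Finset.mem_univ, if_true, mul_comm c]

end Matrix

noncomputable def weylRoot (d : ℕ) : ℂ := exp (2 * Real.pi * I / d)

lemma isPrimitiveRoot_weylRoot (d : ℕ) [NeZero d] : IsPrimitiveRoot (weylRoot d) d :=
  Complex.isPrimitiveRoot_exp d (NeZero.ne d)

noncomputable def weylPhase (d : ℕ) (j v : Fin d) : ℂ := weylRoot d ^ ((j : ℕ) * v)

namespace weylPhase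

lemma comm {d : ℕ} (j v : Fin d) : weylPhase d j v = weylPhase d v j := by
  rw [weylPhase, weylPhase, Nat.mul_comm]

variable {d : ℕ} [NeZero d]

lemma add_left (j k v : Fin d) : weylPhase d (j + k) v = weylPhase d j v * weylPhase d k v := by
  have hroot := isPrimitiveRoot_weylRoot d
  rw [weylPhase, weylPhase, weylPhase, ← pow_add, ← add_mul,
    (hroot.isOfFinOrder (NeZero.ne d)).pow_eq_pow_iff_modEq, ← hroot.eq_orderOf]
  exact (Nat.mod_modEq _ d).mul_right _

lemma mul_star_self (j v : Fin d) : weylPhase d j v * star (weylPhase d j v) = 1 := by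
  rw [RCLike.star_def, RCLike.mul_conj, weylPhase, norm_pow,
    (isPrimitiveRoot_weylRoot d).norm'_eq_one (NeZero.ne d)]
  simp

lemma sum_right (j : Fin d) : ∑ v, weylPhase d j v = if j = 0 then (d : ℂ) else 0 := by
  have hroot := isPrimitiveRoot_weylRoot d
  set ζ := weylRoot d ^ (j : ℕ)
  have hsum : ∑ v, weylPhase d j v = ∑ v ∈ Finset.range d, ζ ^ v := by
    simp only [weylPhase, pow_mul]
    exact Fin.sum_univ_eq_sum_range (ζ ^ ·) d
  rw [hsum]
  split_ifs with h
  · simp [ζ, h]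
  · have hζ : ζ ≠ 1 := hroot.pow_ne_one_of_pos_of_lt (Fin.val_ne_zero_iff.mpr h) j.isLt
    have hζd : ζ ^ d = 1 := by rw [← pow_mul, Nat.mul_comm, pow_mul, hroot.pow_eq_one, one_pow]
    rw [geom_sum_eq hζ, hζd, sub_self, zero_div]

lemma sum_mul_star (j k : Fin d) :
    ∑ v, weylPhase d j v * star (weylPhase d k v) = if j = k then (d : ℂ) else 0 := by
  have hsplit : ∀ v, weylPhase d j v * star (weylPhase d k v) = weylPhase d (j - k) v := by
    intro v
    rw [← mul_one (weylPhase d (j - k) v), ← mul_star_self k v, ← mul_assoc, ← add_left,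
      sub_add_cancel]
  simp only [hsplit, sum_right, sub_eq_zero]

end weylPhase

lemma shiftX_pow_apply (d n : ℕ) (i j : Fin d) :
    (shiftX d ^ n) i j = if (i : ℕ) = (j + n) % d then 1 else 0 := by
  induction n generalizing i with
  | zero => simp [Matrix.one_apply, Fin.ext_iff, Nat.mod_eq_of_lt j.isLt]
  | succ n ih =>
    rw [pow_succ', Matrix.mul_apply, Finset.sum_eq_single ⟨(j + n) % d, Nat.mod_lt _ i.pos⟩]
    · rw [ih, if_pos rfl, mul_one, shiftX, of_apply, Nat.mod_add_mod, add_assoc]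
    · intro k _ hk
      rw [ih, if_neg (fun h => hk (Fin.ext h)), mul_zero]
    · simp

lemma clockZ_pow (d v : ℕ) :
    clockZ d ^ v = diagonal fun i : Fin d => weylRoot d ^ ((i : ℕ) * v) := by
  have hclock : clockZ d = diagonal fun i : Fin d => weylRoot d ^ (i : ℕ) := by
    ext i j
    simp only [clockZ, weylRoot, of_apply, diagonal_apply, ← Complex.exp_nat_mul]
    ring_nf
  rw [hclock, diagonal_pow]
  simp only [Pi.pow_def, pow_mul]

lemma weylW_apply {d : ℕ} (u v i j : Fin d) :
    weylW d u v i j = if i = j + u then weylPhase d j v else 0 := by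
  rw [weylW, clockZ_pow, mul_diagonal, shiftX_pow_apply, ite_mul, one_mul, zero_mul, weylPhase]
  simp only [Fin.ext_iff, Fin.val_add]

lemma bellState_apply {d : ℕ} (u v a b : Fin d) :
    bellState d u v (a, b) =
      if b = a + u then weylPhase d a v * ((√d)⁻¹ : ℝ) else 0 := by
  simp only [bellState, mulVec, dotProduct, Fintype.sum_prod_type, kroneckerMap_apply, one_apply,
    bellPlus, weylW_apply]
  simp only [mul_ite, mul_zero, ite_mul, zero_mul, one_mul]
  rw [Finset.sum_eq_single a (fun x _ hx => by simp [Ne.symm hx]) (by simp)]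
  simp

noncomputable def bellChar {d : ℕ} (k g : Fin d × Fin d) : ℂ :=
  weylPhase d k.1 g.2 * star (weylPhase d g.1 k.2)

section

variable {d : ℕ} [NeZero d]

lemma map_star_kronecker_weylW_mulVec_bellState (g k : Fin d × Fin d) :
    ((weylW d g.1 g.2).map star ⊗ₖ weylW d g.1 g.2) *ᵥ bellState d k.1 k.2 =
      bellChar k g • bellState d k.1 k.2 := by
  ext ⟨a, b⟩
  obtain ⟨x, rfl⟩ : ∃ x, a = x + g.1 := ⟨a - g.1, (sub_add_cancel a g.1).symm⟩
  simp only [mulVec, dotProduct, Fintype.sum_prod_type, kroneckerMap_apply, map_apply, weylW_apply,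
    apply_ite star, star_zero, ite_mul, mul_ite, zero_mul, mul_zero, Fintype.sum_ite_eq_add_right,
    bellState_apply, Pi.smul_apply, smul_eq_mul, add_sub_cancel_right, sub_eq_iff_eq_add,
    add_right_comm x k.1 g.1]
  split_ifs with h
  · rw [h, add_sub_right_comm, add_sub_cancel_right]
    simp only [bellChar, weylPhase.add_left]
    linear_combination (weylPhase d k.1 g.2 * weylPhase d x k.2 * ((√d)⁻¹ : ℝ)) *
      (weylPhase.mul_star_self x g.2 - weylPhase.mul_star_self g.1 k.2)
  · rfl

lemma sum_bellChar_mul_star (k l : Fin d × Fin d) :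
    ∑ g, bellChar k g * star (bellChar l g) = if k = l then (d : ℂ) ^ 2 else 0 := by
  have hsplit : ∀ g : Fin d × Fin d, bellChar k g * star (bellChar l g) =
      (weylPhase d l.2 g.1 * star (weylPhase d k.2 g.1)) *
        (weylPhase d k.1 g.2 * star (weylPhase d l.1 g.2)) := by
    intro g
    rw [bellChar, bellChar, star_mul', star_star, weylPhase.comm g.1 k.2, weylPhase.comm g.1 l.2]
    ring
  rw [Fintype.sum_prod_type]
  simp only [hsplit]
  rw [← Finset.sum_mul_sum, weylPhase.sum_mul_star, weylPhase.sum_mul_star]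
  obtain ⟨k₁, k₂⟩ := k
  obtain ⟨l₁, l₂⟩ := l
  by_cases h₁ : k₁ = l₁ <;> by_cases h₂ : k₂ = l₂ <;> simp [h₁, h₂, eq_comm (a := l₂), sq]

lemma sum_vecMulVec_bellState :
    ∑ k : Fin d × Fin d, vecMulVec (bellState d k.1 k.2) (star (bellState d k.1 k.2)) = 1 := by
  ext ⟨a, b⟩ ⟨a', b'⟩
  obtain ⟨y, rfl⟩ : ∃ y, b = a + y := ⟨b - a, (add_sub_cancel a b).symm⟩
  obtain ⟨y', rfl⟩ : ∃ y', b' = a' + y' := ⟨b' - a', (add_sub_cancel a' b').symm⟩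
  simp only [Matrix.sum_apply, vecMulVec_apply, Fintype.sum_prod_type, Pi.star_apply,
    bellState_apply, add_right_inj, apply_ite star, star_zero, ite_mul, mul_ite, zero_mul, mul_zero,
    Finset.sum_ite_irrel, Finset.sum_const_zero, Finset.sum_ite_eq, Finset.mem_univ, if_true]
  have hnorm : ∀ v, weylPhase d a v * ((√d)⁻¹ : ℝ) * star (weylPhase d a' v * ((√d)⁻¹ : ℝ)) =
      weylPhase d a v * star (weylPhase d a' v) * (d : ℂ)⁻¹ := by
    intro v
    rw [star_mul', Complex.star_def, Complex.conj_ofReal, mul_mul_mul_comm, ← Complex.ofReal_mul,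
      ← mul_inv, Real.mul_self_sqrt d.cast_nonneg, Complex.ofReal_inv, Complex.ofReal_natCast]
  simp only [hnorm, ← Finset.sum_mul, weylPhase.sum_mul_star, one_apply]
  by_cases hy : y = y' <;> by_cases ha : a = a' <;> simp [hy, ha, NeZero.ne]

end

/-- twirling over the Heisenberg–Weyl group makes any operator
Bell-diagonal, with diagonal entries `⟨Φ_{u,v}|Ω|Φ_{u,v}⟩`. -/
theorem twirl_bell_diagonal (d : ℕ) (hd : 2 ≤ d)
    (Ω : Matrix (Fin d × Fin d) (Fin d × Fin d) ℂ) :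
    ((d : ℂ) ^ 2)⁻¹ • ∑ u : Fin d, ∑ v : Fin d,
        ((weylW d u v).map star ⊗ₖ weylW d u v) * Ω *
          ((weylW d u v).map star ⊗ₖ weylW d u v)ᴴ =
      ∑ u : Fin d, ∑ v : Fin d,
        (star (bellState d u v) ⬝ᵥ Ω.mulVec (bellState d u v)) •
          Matrix.vecMulVec (bellState d u v) (star (bellState d u v)) := by
  have : NeZero d := ⟨by omega⟩
  have htwirl := sum_mul_mul_conjTranspose_of_eigenbasis
    (fun g : Fin d × Fin d => (weylW d g.1 g.2).map star ⊗ₖ weylW d g.1 g.2)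
    (fun k => bellState d k.1 k.2) bellChar ((d : ℂ) ^ 2)
    sum_vecMulVec_bellState map_star_kronecker_weylW_mulVec_bellState sum_bellChar_mul_star Ω
  rw [Fintype.sum_prod_type, Fintype.sum_prod_type] at htwirl
  rw [htwirl, smul_smul, inv_mul_cancel₀ (pow_ne_zero 2 (Nat.cast_ne_zero.mpr (NeZero.ne d))),
    one_smul]
end

section
/- Let Ω be a verification operator on C^d ⊗ C^d satisfying 0 ≤ Ω ≤ I and Tr[Ω Φ_+] = 1 (so Φ_+ is in the eigenspace of Ω with eigenvalue 1). Let β(Ω) denote the second largest eigenvalue of Ω and ν(Ω) = 1 − β(Ω) its spectral gap. Then for every state ρ on C^d ⊗ C^d with Tr[Φ_+ ρ] ≤ 1 − ε (where 0 ≤ ε ≤ 1), it holds that Tr[Ω ρ] ≤ 1 − ν(Ω)·ε. -/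
open Matrix
open scoped ComplexOrder

/-- The projector onto the maximally entangled state. -/
noncomputable def bellProj (d : ℕ) : Matrix (Fin d × Fin d) (Fin d × Fin d) ℂ :=
  Matrix.vecMulVec (bellPlus d) (star (bellPlus d))

/-!
Since `Tr[Ω Φ₊] = ⟨Φ₊|Ω|Φ₊⟩ = 1` and `Ω ≤ I`, the vector `|Φ₊⟩` is fixed by `Ω`; as `Ω` is
Hermitian, `Ω` then leaves `|Φ₊⟩^⊥` invariant, where it is bounded by `β`. Hence
`Ω ≤ Φ₊ + β (I - Φ₊)` in the Loewner order, and pairing with the state `ρ` gives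
`Tr[Ω ρ] ≤ β + (1 - β) Tr[Φ₊ ρ] ≤ 1 - (1 - β) ε` when `β ≤ 1`. When `β > 1` the bound
`Tr[Ω ρ] ≤ Tr ρ = 1` already suffices.
-/

namespace Matrix

variable {n 𝕜 : Type*} [Fintype n] [RCLike 𝕜]

lemma trace_mul_vecMulVec_star (A : Matrix n n 𝕜) (u : n → 𝕜) :
    (A * vecMulVec u (star u)).trace = star u ⬝ᵥ A *ᵥ u := by
  rw [mul_vecMulVec, trace_vecMulVec, dotProduct_comm]

lemma vecMulVec_star_mulVec (u y : n → 𝕜) : vecMulVec u (star u) *ᵥ y = (star u ⬝ᵥ y) • u := by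
  rw [vecMulVec_mulVec, op_smul_eq_smul]

variable [DecidableEq n]

lemma PosSemidef.trace_mul_nonneg {A B : Matrix n n 𝕜} (hA : A.PosSemidef)
    (hB : B.PosSemidef) : 0 ≤ (A * B).trace := by
  open scoped MatrixOrder Matrix.Norms.L2Operator in
  obtain ⟨Q, rfl⟩ := CStarAlgebra.nonneg_iff_eq_star_mul_self.mp hB.nonneg
  rw [← Matrix.mul_assoc, trace_mul_comm, ← Matrix.mul_assoc]
  exact (hA.mul_mul_conjTranspose_same Q).trace_nonneg

lemma trace_mul_le_trace_mul_of_posSemidef_sub {A B ρ : Matrix n n 𝕜}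
    (hAB : (B - A).PosSemidef) (hρ : ρ.PosSemidef) : (A * ρ).trace ≤ (B * ρ).trace := by
  simpa [sub_mul, trace_sub, sub_nonneg] using hAB.trace_mul_nonneg hρ

variable {Ω : Matrix n n 𝕜} {u : n → 𝕜}

lemma mulVec_eq_self_of_star_dotProduct_mulVec_eq_one (hu : star u ⬝ᵥ u = 1)
    (hΩ : (1 - Ω).PosSemidef) (h : star u ⬝ᵥ Ω *ᵥ u = 1) : Ω *ᵥ u = u := by
  have h₀ : star u ⬝ᵥ (1 - Ω) *ᵥ u = 0 := by
    rw [sub_mulVec, one_mulVec, dotProduct_sub, hu, h, sub_self]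
  rw [hΩ.dotProduct_mulVec_zero_iff, sub_mulVec, one_mulVec, sub_eq_zero] at h₀
  exact h₀.symm

lemma IsHermitian.posSemidef_smul_one_sub_vecMulVec_add_vecMulVec_sub (hΩ : Ω.IsHermitian)
    (hu : star u ⬝ᵥ u = 1) (hfix : Ω *ᵥ u = u) {β : ℝ}
    (hβ : ∀ x, star u ⬝ᵥ x = 0 → RCLike.re (star x ⬝ᵥ Ω *ᵥ x) ≤ β * RCLike.re (star x ⬝ᵥ x)) :
    (β • (1 - vecMulVec u (star u)) + vecMulVec u (star u) - Ω).PosSemidef := by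
  set P := vecMulVec u (star u)
  have hP : P.IsHermitian := (posSemidef_vecMulVec_self_star u).isHermitian
  have hM : (β • (1 - P) + P - Ω).IsHermitian :=
    (((isHermitian_one.sub hP).smul (IsSelfAdjoint.all β)).add hP).sub hΩ
  refine .of_dotProduct_mulVec_nonneg hM fun y => ?_
  obtain ⟨x, c, hxu, rfl⟩ : ∃ x c, star u ⬝ᵥ x = 0 ∧ y = x + c • u :=
    ⟨y - (star u ⬝ᵥ y) • u, star u ⬝ᵥ y, by simp [dotProduct_sub, hu], by simp⟩
  have hΩxu : star u ⬝ᵥ Ω *ᵥ x = 0 := by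
    rw [dotProduct_mulVec, ← hΩ.eq, ← star_mulVec, hfix, hxu]
  have hMy : (β • (1 - P) + P - Ω) *ᵥ (x + c • u) = β • x - Ω *ᵥ x := by
    have hPy : P *ᵥ (x + c • u) = c • u := by
      rw [vecMulVec_star_mulVec, dotProduct_add, dotProduct_smul, hxu, hu, smul_eq_mul, mul_one,
        zero_add]
    rw [sub_mulVec, add_mulVec, smul_mulVec, sub_mulVec, one_mulVec, hPy, mulVec_add,
      mulVec_smul, hfix]
    module
  have hquad : star (x + c • u) ⬝ᵥ (β • (1 - P) + P - Ω) *ᵥ (x + c • u) =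
      β • (star x ⬝ᵥ x) - star x ⬝ᵥ Ω *ᵥ x := by
    simp [hMy, add_dotProduct, dotProduct_sub, dotProduct_smul, hxu, hΩxu]
  rw [RCLike.nonneg_iff]
  refine ⟨?_, hM.im_star_dotProduct_mulVec_self _⟩
  rw [hquad]
  simpa [RCLike.smul_re] using hβ x hxu

end Matrix

lemma star_bellPlus_dotProduct_self {d : ℕ} (hd : d ≠ 0) :
    star (bellPlus d) ⬝ᵥ bellPlus d = 1 := by
  simp only [dotProduct, Pi.star_apply, bellPlus, one_div, Complex.ofReal_inv, RCLike.star_def,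
    mul_ite, mul_zero, Fintype.sum_prod_type, Finset.sum_ite_eq, Finset.mem_univ, ↓reduceIte,
    map_inv₀, Complex.conj_ofReal, Finset.sum_const, Finset.card_univ, Fintype.card_fin,
    nsmul_eq_mul]
  rw [← mul_inv, ← Complex.ofReal_mul, Real.mul_self_sqrt (Nat.cast_nonneg d)]
  exact mul_inv_cancel₀ (by exact_mod_cast hd)

theorem verification_operator_bound_general (d : ℕ) (hd : 2 ≤ d)
    (Ω : Matrix (Fin d × Fin d) (Fin d × Fin d) ℂ) (β ε : ℝ)
    (hΩle : ((1 : Matrix (Fin d × Fin d) (Fin d × Fin d) ℂ) - Ω).PosSemidef)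
    (hΩtr : (Ω * bellProj d).trace = 1)
    (hβ : ∀ x : Fin d × Fin d → ℂ, star (bellPlus d) ⬝ᵥ x = 0 →
      (star x ⬝ᵥ Ω.mulVec x).re ≤ β * (star x ⬝ᵥ x).re)
    (ρ : Matrix (Fin d × Fin d) (Fin d × Fin d) ℂ)
    (hρ : ρ.PosSemidef) (hρtr : ρ.trace = 1)
    (hfid : ((bellProj d * ρ).trace).re ≤ 1 - ε)
    (hε0 : 0 ≤ ε) :
    ((Ω * ρ).trace).re ≤ 1 - (1 - β) * ε := by
  rw [bellProj] at hΩtr hfid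
  have hu := star_bellPlus_dotProduct_self (by omega : d ≠ 0)
  have hΩ : Ω.IsHermitian := by simpa using isHermitian_one.sub hΩle.isHermitian
  have hfix : Ω *ᵥ bellPlus d = bellPlus d :=
    mulVec_eq_self_of_star_dotProduct_mulVec_eq_one hu hΩle (by rwa [← trace_mul_vecMulVec_star])
  rcases le_or_gt β 1 with hβ1 | hβ1
  · have hbound := Complex.re_le_re <| trace_mul_le_trace_mul_of_posSemidef_sub
      (hΩ.posSemidef_smul_one_sub_vecMulVec_add_vecMulVec_sub hu hfix hβ) hρ
    simp only [add_mul, smul_mul_assoc, sub_mul, one_mul, trace_add, trace_smul, trace_sub, hρtr,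
      Complex.real_smul, Complex.add_re, Complex.mul_re, Complex.ofReal_re, Complex.sub_re,
      Complex.one_re, Complex.ofReal_im, Complex.sub_im, Complex.one_im, zero_sub, mul_neg,
      zero_mul, neg_zero, sub_zero] at hbound
    nlinarith [mul_le_mul_of_nonneg_left hfid (sub_nonneg.mpr hβ1)]
  · have hbound := Complex.re_le_re <| trace_mul_le_trace_mul_of_posSemidef_sub hΩle hρ
    rw [one_mul, hρtr, Complex.one_re] at hbound
    nlinarith

/-- for a verification operator `0 ≤ Ω ≤ I` with `Tr[Ω Φ₊] = 1` and
second largest eigenvalue (at most) `β`, every state `ρ` with `Tr[Φ₊ ρ] ≤ 1 − ε`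
satisfies `Tr[Ω ρ] ≤ 1 − (1 − β)ε`. -/
theorem verification_operator_bound (d : ℕ) (hd : 2 ≤ d)
    (Ω : Matrix (Fin d × Fin d) (Fin d × Fin d) ℂ) (β ε : ℝ)
    (hΩpos : Ω.PosSemidef) (hΩle : ((1 : Matrix (Fin d × Fin d) (Fin d × Fin d) ℂ) - Ω).PosSemidef)
    (hΩtr : (Ω * bellProj d).trace = 1)
    (hβ : ∀ x : Fin d × Fin d → ℂ, star (bellPlus d) ⬝ᵥ x = 0 →
      (star x ⬝ᵥ Ω.mulVec x).re ≤ β * (star x ⬝ᵥ x).re)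
    (ρ : Matrix (Fin d × Fin d) (Fin d × Fin d) ℂ)
    (hρ : ρ.PosSemidef) (hρtr : ρ.trace = 1)
    (hfid : ((bellProj d * ρ).trace).re ≤ 1 - ε)
    (hε0 : 0 ≤ ε) (hε1 : ε ≤ 1) :
    ((Ω * ρ).trace).re ≤ 1 - (1 - β) * ε :=
  verification_operator_bound_general d hd Ω β ε hΩle hΩtr hβ ρ hρ hρtr hfid hε0
end

section
/- For d+1 mutually unbiased bases B_1,...,B_{d+1} of C^d (d a prime power), the average of the conjugate-basis projectors P(B_l) = Σ_{ψ∈B_l} ψ* ⊗ ψ equals the optimal verification operator: (1/(d+1)) Σ_{l=1}^{d+1} P(B_l) = (I + d·Φ_+)/(d+1), where Φ_+ is the projector onto (1/√d)Σ_j|jj⟩ and ψ* is the entrywise complex conjugate of the rank-one projector ψ. -/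
open Matrix
open scoped Kronecker

/-- Rank-one projector onto a vector. -/
noncomputable def proj {n : Type*} [Fintype n] (v : n → ℂ) : Matrix n n ℂ :=
  Matrix.vecMulVec v (star v)

section aux
variable {n m : Type*} [Fintype n] [Fintype m]

lemma proj_herm (v : n → ℂ) : (proj v)ᴴ = proj v := by
  ext i j
  simp [proj, vecMulVec_apply, conjTranspose_apply, mul_comm]

lemma proj_map_star (v : n → ℂ) : (proj v).map star = proj (star v) := by
  ext i j
  simp [proj, vecMulVec_apply, mul_comm]

lemma trace_proj (v : n → ℂ) : trace (proj v) = star v ⬝ᵥ v := by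
  simp [trace, diag, proj, vecMulVec_apply, dotProduct, mul_comm]

lemma trace_proj_mul (v w : n → ℂ) :
    trace (proj v * proj w) = (star v ⬝ᵥ w) * (star w ⬝ᵥ v) := by
  simp only [trace, diag, mul_apply, proj, vecMulVec_apply, dotProduct, Pi.star_apply,
    Finset.sum_mul_sum]
  rw [Finset.sum_comm]
  refine Finset.sum_congr rfl fun j _ => Finset.sum_congr rfl fun i _ => by ring

lemma proj_kronecker (u : m → ℂ) (w : n → ℂ) :
    proj u ⊗ₖ proj w = proj (fun p : m × n => u p.1 * w p.2) := by
  ext p q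
  simp [proj, vecMulVec_apply, kroneckerMap_apply]
  ring

lemma matrix_eq_zero_of_trace (A : Matrix n n ℂ) (h : trace (Aᴴ * A) = 0) : A = 0 := by
  have h1 : trace (Aᴴ * A) = ((∑ i, ∑ j, Complex.normSq (A j i) : ℝ) : ℂ) := by
    push_cast
    simp only [trace, diag, mul_apply, conjTranspose_apply]
    refine Finset.sum_congr rfl fun i _ => Finset.sum_congr rfl fun j _ => ?_
    rw [Complex.star_def, mul_comm, Complex.mul_conj]
  rw [h1] at h
  have h2 : (∑ i, ∑ j, Complex.normSq (A j i) : ℝ) = 0 := by exact_mod_cast h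
  ext i j
  have hnn : ∀ a ∈ Finset.univ, (0:ℝ) ≤ ∑ b, Complex.normSq (A b a) :=
    fun a _ => Finset.sum_nonneg fun b _ => Complex.normSq_nonneg _
  have h3 := (Finset.sum_eq_zero_iff_of_nonneg hnn).mp h2 j (Finset.mem_univ _)
  have h4 := (Finset.sum_eq_zero_iff_of_nonneg
    (fun b _ => Complex.normSq_nonneg (A b j))).mp h3 i (Finset.mem_univ _)
  simpa using Complex.normSq_eq_zero.mp h4

lemma eq_of_herm_traces (A C : Matrix n n ℂ) (hA : Aᴴ = A) (hC : Cᴴ = C)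
    (h : trace (A * A) - 2 * trace (A * C) + trace (C * C) = 0) : A = C := by
  have key : trace ((A - C)ᴴ * (A - C)) = 0 := by
    rw [conjTranspose_sub, hA, hC, sub_mul, mul_sub, mul_sub, trace_sub, trace_sub, trace_sub,
      trace_mul_comm C A]
    linear_combination h
  exact sub_eq_zero.mp (matrix_eq_zero_of_trace _ key)

end aux

section aux2
variable {d : ℕ}

lemma dot_pair (ψ φ : Fin d → ℂ) :
    star (fun p : Fin d × Fin d => star ψ p.1 * ψ p.2) ⬝ᵥ
        (fun p : Fin d × Fin d => star φ p.1 * φ p.2)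
      = (star φ ⬝ᵥ ψ) * (star ψ ⬝ᵥ φ) := by
  simp only [dotProduct, Pi.star_apply, star_mul', star_star, Fintype.sum_prod_type,
    Finset.sum_mul_sum]
  refine Finset.sum_congr rfl fun a _ => Finset.sum_congr rfl fun b _ => by ring

lemma pair_dot_bell (ψ : Fin d → ℂ) :
    star (fun p : Fin d × Fin d => star ψ p.1 * ψ p.2) ⬝ᵥ bellPlus d
      = ((1 / Real.sqrt d : ℝ) : ℂ) * (star ψ ⬝ᵥ ψ) := by
  simp only [dotProduct, Pi.star_apply, bellPlus, star_mul', star_star, Fintype.sum_prod_type,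
    mul_ite, mul_zero, Finset.sum_ite_eq, Finset.mem_univ, if_true]
  rw [Finset.mul_sum]
  exact Finset.sum_congr rfl fun a _ => by ring

lemma bell_dot_pair (ψ : Fin d → ℂ) :
    star (bellPlus d) ⬝ᵥ (fun p : Fin d × Fin d => star ψ p.1 * ψ p.2)
      = ((1 / Real.sqrt d : ℝ) : ℂ) * (star ψ ⬝ᵥ ψ) := by
  simp only [dotProduct, Pi.star_apply, bellPlus, Fintype.sum_prod_type, apply_ite,
    star_zero, Complex.star_def, Complex.conj_ofReal, ite_mul, zero_mul,
    Finset.sum_ite_eq, Finset.mem_univ, if_true]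
  rw [Finset.mul_sum]

lemma bell_dot_self (hd : 0 < d) : star (bellPlus d) ⬝ᵥ bellPlus d = 1 := by
  simp only [dotProduct, Pi.star_apply, bellPlus, Fintype.sum_prod_type, apply_ite,
    star_zero, Complex.star_def, Complex.conj_ofReal, ite_mul, zero_mul, mul_ite, mul_zero,
    Finset.sum_ite_eq, Finset.mem_univ, if_true]
  simp only [if_pos rfl, ← Complex.ofReal_mul, Finset.sum_const, Finset.card_univ,
    Fintype.card_fin, nsmul_eq_mul]
  have h1 : (1 / Real.sqrt d) * (1 / Real.sqrt d) = 1 / d := by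
    rw [div_mul_div_comm, one_mul, Real.mul_self_sqrt (Nat.cast_nonneg d)]
  rw [h1]
  push_cast
  rw [mul_one_div]
  exact div_self (Nat.cast_ne_zero.mpr hd.ne')

end aux2

/-- for `d+1` mutually unbiased bases of `ℂ^d`, the average of the
conjugate-basis projectors `P(B_l) = ∑_{ψ∈B_l} ψ* ⊗ ψ` equals `(I + d·Φ₊)/(d+1)`. -/
theorem mub_conjugate_basis_test (d : ℕ) (hd : 2 ≤ d)
    (B : Fin (d + 1) → Fin d → (Fin d → ℂ))
    (horth : ∀ l i j, star (B l i) ⬝ᵥ B l j = if i = j then 1 else 0)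
    (hmub : ∀ l m, l ≠ m → ∀ i j, ‖star (B l i) ⬝ᵥ B m j‖ ^ 2 = 1 / d) :
    ((d : ℂ) + 1)⁻¹ • ∑ l : Fin (d + 1), ∑ i : Fin d,
        ((proj (B l i)).map star ⊗ₖ proj (B l i)) =
      ((d : ℂ) + 1)⁻¹ • ((1 : Matrix (Fin d × Fin d) (Fin d × Fin d) ℂ) +
        (d : ℂ) • Matrix.vecMulVec (bellPlus d) (star (bellPlus d))) := by
  have hd0 : 0 < d := lt_of_lt_of_le two_pos hd
  have hdC : (d:ℂ) ≠ 0 := Nat.cast_ne_zero.mpr hd0.ne'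
  congr 1
  -- the pair vectors
  set x : Fin (d+1) → Fin d → (Fin d × Fin d → ℂ) :=
    fun l i => fun p => star (B l i) p.1 * B l i p.2 with hxdef
  have hQ : ∀ l i, (proj (B l i)).map star ⊗ₖ proj (B l i) = proj (x l i) := by
    intro l i
    rw [proj_map_star, proj_kronecker]
  have hRb : Matrix.vecMulVec (bellPlus d) (star (bellPlus d)) = proj (bellPlus d) := rfl
  simp only [hQ, hRb]
  -- self inner products
  have hself : ∀ l i, star (x l i) ⬝ᵥ x l i = 1 := by
    intro l i
    rw [hxdef, dot_pair, horth l i i, if_pos rfl, one_mul]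
  -- trace values between pair projectors
  have tval : ∀ l i m j, trace (proj (x l i) * proj (x m j))
      = if l = m then (if i = j then (1:ℂ) else 0) else (d:ℂ)⁻¹ * (d:ℂ)⁻¹ := by
    intro l i m j
    rw [trace_proj_mul, hxdef, dot_pair, dot_pair]
    by_cases h : l = m
    · subst h
      rw [horth, horth]
      by_cases hij : i = j
      · subst hij; simp
      · simp [hij, Ne.symm hij]
    · have hc : star (B m j) ⬝ᵥ B l i = star (star (B l i) ⬝ᵥ B m j) := by
        rw [star_dotProduct]
      set c := star (B l i) ⬝ᵥ B m j with hcdef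
      have hn : c * star c = ((1/d : ℝ) : ℂ) := by
        rw [← hmub l m h i j]
        rw [Complex.star_def, Complex.mul_conj']
        push_cast
        ring
      rw [hc, if_neg h]
      have he : star c * c * (c * star c) = (c * star c) * (c * star c) := by ring
      rw [he, hn]
      push_cast
      ring
  -- trace of pair projector with bell projector
  have tbell : ∀ l i, trace (proj (x l i) * proj (bellPlus d)) = (d:ℂ)⁻¹ := by
    intro l i
    have h1 := horth l i i
    rw [if_pos rfl] at h1
    rw [trace_proj_mul, hxdef, pair_dot_bell, bell_dot_pair, h1, mul_one,
      ← Complex.ofReal_mul, div_mul_div_comm, one_mul,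
      Real.mul_self_sqrt (Nat.cast_nonneg d)]
    push_cast
    rw [one_div]
  -- apply the Hilbert-Schmidt argument
  apply eq_of_herm_traces
  · simp only [conjTranspose_sum, proj_herm]
  · simp [conjTranspose_add, conjTranspose_smul, conjTranspose_one, proj_herm]
  · -- the trace computation
    have tAA : trace ((∑ l : Fin (d+1), ∑ i : Fin d, proj (x l i)) *
        (∑ l : Fin (d+1), ∑ i : Fin d, proj (x l i))) = ((d:ℂ)+1) * (2*d) := by
      simp only [Finset.sum_mul, Finset.mul_sum, trace_sum, tval]
      have swap : (∑ l : Fin (d+1), ∑ i : Fin d, ∑ m : Fin (d+1), ∑ j : Fin d,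
          (if m = l then (if j = i then (1:ℂ) else 0) else (d:ℂ)⁻¹ * (d:ℂ)⁻¹))
          = ∑ l : Fin (d+1), ∑ m : Fin (d+1), ∑ i : Fin d, ∑ j : Fin d,
          (if m = l then (if j = i then (1:ℂ) else 0) else (d:ℂ)⁻¹ * (d:ℂ)⁻¹) :=
        Finset.sum_congr rfl fun l _ => Finset.sum_comm
          
      rw [swap]
      have inner : ∀ l m : Fin (d+1), (∑ i : Fin d, ∑ j : Fin d,
          (if m = l then (if j = i then (1:ℂ) else 0) else (d:ℂ)⁻¹ * (d:ℂ)⁻¹))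
          = if m = l then (d:ℂ) else 1 := by
        intro l m
        by_cases h : m = l
        · simp [h, Finset.sum_ite_eq']
        · simp only [if_neg h, Finset.sum_const, Finset.card_univ, Fintype.card_fin,
            nsmul_eq_mul]
          field_simp
      simp only [inner]
      have h1 : ∀ l m : Fin (d+1), (if m = l then (d:ℂ) else 1)
          = (if m = l then (d:ℂ)-1 else 0) + 1 := by
        intro l m; split <;> ring
      simp only [h1, Finset.sum_add_distrib, Finset.sum_ite_eq', Finset.mem_univ, if_true,
        Finset.sum_const, Finset.card_univ, Fintype.card_fin, nsmul_eq_mul]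
      push_cast
      ring
    have tAC : trace ((∑ l : Fin (d+1), ∑ i : Fin d, proj (x l i)) *
        ((1 : Matrix (Fin d × Fin d) (Fin d × Fin d) ℂ) + (d:ℂ) • proj (bellPlus d)))
        = ((d:ℂ)+1) * (2*d) := by
      rw [mul_add, mul_one, trace_add, Matrix.mul_smul, trace_smul]
      have t1 : trace (∑ l : Fin (d+1), ∑ i : Fin d, proj (x l i)) = ((d:ℂ)+1) * d := by
        simp only [trace_sum, trace_proj, hself, Finset.sum_const, Finset.card_univ,
          Fintype.card_fin, nsmul_eq_mul]
        push_cast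
        ring
      have t2 : trace ((∑ l : Fin (d+1), ∑ i : Fin d, proj (x l i)) * proj (bellPlus d))
          = ((d:ℂ)+1) * d * (d:ℂ)⁻¹ := by
        simp only [Finset.sum_mul, trace_sum, tbell, Finset.sum_const, Finset.card_univ,
          Fintype.card_fin, nsmul_eq_mul]
        push_cast
        ring
      rw [t1, t2, smul_eq_mul]
      field_simp
      ring
    have tCC : trace (((1 : Matrix (Fin d × Fin d) (Fin d × Fin d) ℂ)
          + (d:ℂ) • proj (bellPlus d)) *
        ((1 : Matrix (Fin d × Fin d) (Fin d × Fin d) ℂ) + (d:ℂ) • proj (bellPlus d)))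
        = ((d:ℂ)+1) * (2*d) := by
      have tP : trace (proj (bellPlus d)) = 1 := by
        rw [trace_proj, bell_dot_self hd0]
      have tPP : trace (proj (bellPlus d) * proj (bellPlus d)) = 1 := by
        rw [trace_proj_mul, bell_dot_self hd0, mul_one]
      simp only [add_mul, mul_add, one_mul, mul_one, Matrix.smul_mul, Matrix.mul_smul,
        smul_smul, trace_add, trace_smul, trace_one, tP, tPP, smul_eq_mul,
        Fintype.card_prod, Fintype.card_fin]
      push_cast
      ring
    rw [tAA, tAC, tCC]
    ring
end

section
/- For the entanglement witness W = I/d − Φ_+ on C^d ⊗ C^d, the generalized robustness of entanglement satisfies R^s_G(ρ) ≥ d·Tr[ρ Φ_+] − 1 for any state ρ with Tr[ρΦ_+] ≥ 1/d; in particular this follows from R^s_G(ρ) ≥ |Tr[W ρ]|/λ_max where λ_max = 1/d is the largest eigenvalue of W. -/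
open Matrix
open scoped Kronecker ComplexOrder

/-- A density matrix: positive semidefinite with unit trace. -/
def IsDensity {n : Type*} [Fintype n] [DecidableEq n] (ρ : Matrix n n ℂ) : Prop :=
  ρ.PosSemidef ∧ ρ.trace = 1

/-- A bipartite state is separable if it is a convex combination of product states. -/
def IsSepState (d : ℕ) (ρ : Matrix (Fin d × Fin d) (Fin d × Fin d) ℂ) : Prop :=
  ∃ (m : ℕ) (p : Fin m → ℝ) (A B : Fin m → Matrix (Fin d) (Fin d) ℂ),
    (∀ i, 0 ≤ p i) ∧ (∑ i, p i = 1) ∧ (∀ i, IsDensity (A i) ∧ IsDensity (B i)) ∧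
    ρ = ∑ i, (p i : ℂ) • (A i ⊗ₖ B i)

/-- Feasible set for the generalized robustness of entanglement of a state. -/
def genRobustnessSet (d : ℕ) (ρ : Matrix (Fin d × Fin d) (Fin d × Fin d) ℂ) : Set ℝ :=
  {t : ℝ | 0 ≤ t ∧ ∃ σ : Matrix (Fin d × Fin d) (Fin d × Fin d) ℂ,
    IsDensity σ ∧ IsSepState d ((((1 + t : ℝ)) : ℂ)⁻¹ • (ρ + ((t : ℝ) : ℂ) • σ))}

/-! The witness `W = d⁻¹ • 1 - Φ₊` is nonnegative on separable states: a product state `A ⊗ B`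
has Bell fidelity `Tr[A Bᵀ] / d ≤ 1 / d`. On an arbitrary state `σ` one has `Tr[W σ] ≤ 1 / d`.
So if `(ρ + t σ) / (1 + t)` is separable, then `0 ≤ Tr[W ρ] + t Tr[W σ] ≤ 1 / d - Tr[ρ Φ₊] + t / d`,
that is `t ≥ d Tr[ρ Φ₊] - 1`. -/

namespace Matrix

lemma trace_mul_vecMulVec {n R : Type*} [Fintype n] [CommSemiring R] (M : Matrix n n R)
    (v w : n → R) : (M * vecMulVec v w).trace = w ⬝ᵥ (M *ᵥ v) := by
  rw [mul_vecMulVec, trace_vecMulVec, dotProduct_comm]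

variable {n : Type*} [Fintype n] [DecidableEq n] {A C : Matrix n n ℂ}

open scoped MatrixOrder Matrix.Norms.L2Operator in
lemma PosSemidef.trace_mul_nonneg_s17 (hA : A.PosSemidef) (hC : C.PosSemidef) :
    0 ≤ (A * C).trace := by
  obtain ⟨B, rfl⟩ := CStarAlgebra.nonneg_iff_eq_star_mul_self.mp hA.nonneg
  rw [← trace_mul_cycle]
  exact (hC.mul_mul_conjTranspose_same B).trace_nonneg

lemma PosSemidef.one_sub_of_trace_eq_one (hC : C.PosSemidef) (hCt : C.trace = 1) :
    (1 - C).PosSemidef := by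
  have hsum : ∑ i, hC.1.eigenvalues i = 1 := by
    have := hC.1.trace_eq_sum_eigenvalues.symm.trans hCt
    rwa [← RCLike.ofReal_sum, ← RCLike.ofReal_one, RCLike.ofReal_inj] at this
  rw [posSemidef_iff_isHermitian_and_spectrum_nonneg, ← map_one (algebraMap ℂ _),
    ← spectrum.singleton_sub_eq, hC.1.spectrum_eq_image_range]
  refine ⟨isHermitian_one.sub hC.1, ?_⟩
  rintro _ ⟨_, rfl, _, ⟨_, ⟨i, rfl⟩, rfl⟩, rfl⟩
  have : hC.1.eigenvalues i ≤ 1 :=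
    hsum ▸ Finset.single_le_sum (fun j _ => hC.eigenvalues_nonneg j) (Finset.mem_univ i)
  have h := Complex.zero_le_real.mpr (sub_nonneg.mpr this)
  push_cast at h
  exact h

lemma PosSemidef.re_trace_mul_le_one (hA : A.PosSemidef) (hAt : A.trace = 1)
    (hC : C.PosSemidef) (hCt : C.trace = 1) : (A * C).trace.re ≤ 1 := by
  have h := (hA.trace_mul_nonneg_s17 (hC.one_sub_of_trace_eq_one hCt)).1
  rw [Matrix.mul_sub, Matrix.mul_one, trace_sub, hAt] at h
  simpa [sub_nonneg] using h

end Matrix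

lemma trace_kronecker_mul_bellProj (d : ℕ) (A B : Matrix (Fin d) (Fin d) ℂ) :
    ((A ⊗ₖ B) * bellProj d).trace = (d : ℂ)⁻¹ * (A * Bᵀ).trace := by
  have hsq : ((1 / √d : ℝ) : ℂ) * ((1 / √d : ℝ) : ℂ) = (d : ℂ)⁻¹ := by
    rw [← Complex.ofReal_mul, div_mul_div_comm, one_mul, Real.mul_self_sqrt d.cast_nonneg]
    push_cast; ring
  rw [bellProj, trace_mul_vecMulVec, ← hsq]
  simp only [dotProduct, mulVec, bellPlus, Pi.star_apply, Fintype.sum_prod_type, trace, diag,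
    mul_apply, transpose_apply, kroneckerMap_apply, apply_ite (star : ℂ → ℂ), star_zero,
    Complex.star_def, Complex.conj_ofReal, ite_mul, mul_ite, zero_mul, mul_zero,
    Finset.sum_ite_eq, Finset.mem_univ, if_true, Finset.mul_sum]
  refine Finset.sum_congr rfl fun i _ => ?_
  rw [Finset.sum_comm]
  simp only [Finset.sum_ite_eq, Finset.mem_univ, if_true]
  exact Finset.sum_congr rfl fun j _ => by ring

lemma IsSepState.trace_eq_one {d : ℕ} {τ : Matrix (Fin d × Fin d) (Fin d × Fin d) ℂ}
    (hτ : IsSepState d τ) : τ.trace = 1 := by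
  obtain ⟨m, p, A, B, -, hp, hAB, rfl⟩ := hτ
  simp only [trace_sum, trace_smul, trace_kronecker, (hAB _).1.2, (hAB _).2.2, mul_one,
    smul_eq_mul]
  exact_mod_cast hp

lemma IsSepState.re_trace_mul_bellProj_le {d : ℕ}
    {τ : Matrix (Fin d × Fin d) (Fin d × Fin d) ℂ} (hτ : IsSepState d τ) :
    (τ * bellProj d).trace.re ≤ (d : ℝ)⁻¹ := by
  obtain ⟨m, p, A, B, hp0, hp, hAB, rfl⟩ := hτ
  have hprod : ∀ i, ((A i ⊗ₖ B i) * bellProj d).trace.re ≤ (d : ℝ)⁻¹ := fun i => by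
    obtain ⟨⟨hA, hAt⟩, hB, hBt⟩ := hAB i
    rw [trace_kronecker_mul_bellProj, ← Complex.ofReal_natCast, ← Complex.ofReal_inv,
      Complex.re_ofReal_mul]
    exact mul_le_of_le_one_right (by positivity)
      (hA.re_trace_mul_le_one hAt hB.transpose (by rwa [trace_transpose]))
  calc ((∑ i, (p i : ℂ) • (A i ⊗ₖ B i)) * bellProj d).trace.re
      = ∑ i, p i * ((A i ⊗ₖ B i) * bellProj d).trace.re := by
        simp only [Finset.sum_mul, trace_sum, smul_mul_assoc, trace_smul, smul_eq_mul,
          Complex.re_sum, Complex.re_ofReal_mul]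
    _ ≤ ∑ i, p i * (d : ℝ)⁻¹ :=
        Finset.sum_le_sum fun i _ => mul_le_mul_of_nonneg_left (hprod i) (hp0 i)
    _ = (d : ℝ)⁻¹ := by rw [← Finset.sum_mul, hp, one_mul]

def IsEntanglementWitness (d : ℕ) (W : Matrix (Fin d × Fin d) (Fin d × Fin d) ℂ) : Prop :=
  ∀ τ, IsSepState d τ → 0 ≤ (τ * W).trace.re

lemma IsEntanglementWitness.neg_re_trace_mul_le_mul {d : ℕ}
    {W ρ : Matrix (Fin d × Fin d) (Fin d × Fin d) ℂ} {c t : ℝ} (hW : IsEntanglementWitness d W)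
    (hc : ∀ σ, IsDensity σ → (σ * W).trace.re ≤ c) (ht : t ∈ genRobustnessSet d ρ) :
    -(ρ * W).trace.re ≤ c * t := by
  obtain ⟨ht0, σ, hσ, hsep⟩ := ht
  have h := hW _ hsep
  rw [smul_mul_assoc, trace_smul, add_mul, trace_add, smul_mul_assoc, trace_smul, smul_eq_mul,
    smul_eq_mul, ← Complex.ofReal_inv, Complex.re_ofReal_mul, Complex.add_re,
    Complex.re_ofReal_mul, mul_nonneg_iff_of_pos_left (by positivity)] at h
  linarith [mul_le_mul_of_nonneg_left (hc σ hσ) ht0]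

noncomputable def bellWitness (d : ℕ) : Matrix (Fin d × Fin d) (Fin d × Fin d) ℂ :=
  (d : ℂ)⁻¹ • 1 - bellProj d

lemma re_trace_mul_bellWitness {d : ℕ} {τ : Matrix (Fin d × Fin d) (Fin d × Fin d) ℂ}
    (hτ : τ.trace = 1) :
    (τ * bellWitness d).trace.re = (d : ℝ)⁻¹ - (τ * bellProj d).trace.re := by
  rw [bellWitness, Matrix.mul_sub, mul_smul_comm, Matrix.mul_one, trace_sub, trace_smul, hτ,
    smul_eq_mul, mul_one, Complex.sub_re, ← Complex.ofReal_natCast, ← Complex.ofReal_inv,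
    Complex.ofReal_re]

lemma isEntanglementWitness_bellWitness (d : ℕ) : IsEntanglementWitness d (bellWitness d) :=
  fun τ hτ => by
    rw [re_trace_mul_bellWitness hτ.trace_eq_one, sub_nonneg]
    exact hτ.re_trace_mul_bellProj_le

lemma re_trace_mul_bellWitness_le {d : ℕ} {σ : Matrix (Fin d × Fin d) (Fin d × Fin d) ℂ}
    (hσ : IsDensity σ) : (σ * bellWitness d).trace.re ≤ (d : ℝ)⁻¹ := by
  rw [re_trace_mul_bellWitness hσ.2, sub_le_self_iff, bellProj, trace_mul_vecMulVec]
  exact (Complex.le_def.mp (hσ.1.dotProduct_mulVec_nonneg (bellPlus d))).1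

theorem gen_robustness_lower_bound_general (d : ℕ) (hd : 2 ≤ d)
    (ρ : Matrix (Fin d × Fin d) (Fin d × Fin d) ℂ) (hρ : IsDensity ρ)
    (hne : (genRobustnessSet d ρ).Nonempty) :
    (d : ℝ) * ((ρ * bellProj d).trace).re - 1 ≤ sInf (genRobustnessSet d ρ) := by
  refine le_csInf hne fun t ht => ?_
  have h := (isEntanglementWitness_bellWitness d).neg_re_trace_mul_le_mul
    (fun σ => re_trace_mul_bellWitness_le) ht
  rw [re_trace_mul_bellWitness hρ.2, neg_sub] at h
  have hd0 : (d : ℝ) ≠ 0 := by positivity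
  calc (d : ℝ) * (ρ * bellProj d).trace.re - 1
      = d * ((ρ * bellProj d).trace.re - (d : ℝ)⁻¹) := by field_simp
    _ ≤ d * ((d : ℝ)⁻¹ * t) := by gcongr
    _ = t := by field_simp

/-- the generalized robustness of entanglement is lower bounded via
the witness `W = I/d − Φ₊`: `R^s_G(ρ) ≥ d·Tr[ρΦ₊] − 1`. -/
theorem gen_robustness_lower_bound (d : ℕ) (hd : 2 ≤ d)
    (ρ : Matrix (Fin d × Fin d) (Fin d × Fin d) ℂ) (hρ : IsDensity ρ)
    (hfid : (1 : ℝ) / d ≤ ((ρ * bellProj d).trace).re)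
    (hne : (genRobustnessSet d ρ).Nonempty) :
    (d : ℝ) * ((ρ * bellProj d).trace).re - 1 ≤ sInf (genRobustnessSet d ρ) :=
  gen_robustness_lower_bound_general d hd ρ hρ hne
end
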